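/- A vertical line V_x = {x}×ℤ is complete in Γ_k if and only if every base-3 digit x_i of x with i < k lies in {0,2}; consequently Γ_k has exactly 2^k complete vertical lines and, by symmetry, exactly 2^k complete horizontal lines. -/

import Mathlib

open scoped Classical

/-- Reachability within the subgraph of `X` induced on a vertex set `s`. -/
def SimpleGraph.ReachIn {V : Type*} (X : SimpleGraph V) (s : Set V) (v w : V) : Prop :=
  ∃ (hv : v ∈ s) (hw : w ∈ s), (X.induce s).Reachable ⟨v, hv⟩ ⟨w, hw⟩

/-- The vertex set of the connected component of `v` in the subgraph of `X` induced on `s`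
(empty if `v ∉ s`). -/
def SimpleGraph.compIn {V : Type*} (X : SimpleGraph V) (s : Set V) (v : V) : Set V :=
  {w | X.ReachIn s v w}

/-- `T` is a vertex set witnessing `cut¹ᐟ²` for the subgraph of `X` induced on the finite
vertex set `G`: after removing `T` from `G`, every connected component has at most
`|G|/2` vertices. -/
def IsHalfCutSet {V : Type*} (X : SimpleGraph V) (G T : Finset V) : Prop :=
  T ⊆ G ∧ ∀ v : V, 2 * (X.compIn (↑(G \ T)) v).ncard ≤ G.card

/-- `cut¹ᐟ²` of the subgraph of `X` induced on the finite vertex set `G`: the least size of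
a vertex set whose removal leaves all connected components of size at most `|G|/2`. -/
noncomputable def cutHalf {V : Type*} (X : SimpleGraph V) (G : Finset V) : ℕ :=
  sInf {t | ∃ T : Finset V, IsHalfCutSet X G T ∧ T.card = t}

/-- The `1/2`-separation profile of `X`, over finite subgraphs with vertex set inside `W`. -/
noncomputable def sepHalf {V : Type*} (X : SimpleGraph V) (W : Set V) (n : ℕ) : ℕ :=
  sSup {c | ∃ G : Finset V, ↑G ⊆ W ∧ G.card ≤ n ∧ c = cutHalf X G}

/-- The `i`-th digit of `x` in base `b`. -/
def digit (b i x : ℕ) : ℕ := x / b ^ i % b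

/-- Membership in the vertex set of the infinite Sierpinski graph: no position at which
both coordinates have base-3 digit `1`. -/
def SierpMem (p : ℕ × ℕ) : Prop :=
  ∀ i : ℕ, ¬(digit 3 i p.1 = 1 ∧ digit 3 i p.2 = 1)

/-- The infinite Sierpinski graph `S`, with edges between valid points at `ℓ¹`-distance 1. -/
def SierpGraph : SimpleGraph (ℕ × ℕ) where
  Adj p q := SierpMem p ∧ SierpMem q ∧ |(p.1 : ℤ) - q.1| + |(p.2 : ℤ) - q.2| = 1
  symm := by
    refine ⟨?_⟩
    rintro p q ⟨hp, hq, h⟩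
    exact ⟨hq, hp, by
      rw [abs_sub_comm (q.1 : ℤ) (p.1 : ℤ), abs_sub_comm (q.2 : ℤ) (p.2 : ℤ)]; exact h⟩
  loopless := by refine ⟨?_⟩; rintro p ⟨-, -, h⟩; simp at h

/-- The vertex set of the sphere `Γ_k`. -/
noncomputable def GammaV (k : ℕ) : Finset (ℕ × ℕ) :=
  (Finset.range (3 ^ k) ×ˢ Finset.range (3 ^ k)).filter SierpMem

/-- The intersection of the vertical line `V_x` with `Γ_k`. -/
def VlineSet (k x : ℕ) : Set (ℕ × ℕ) := {p | p ∈ GammaV k ∧ p.1 = x}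

/-- The intersection of the horizontal line `H_y` with `Γ_k`. -/
def HlineSet (k y : ℕ) : Set (ℕ × ℕ) := {p | p ∈ GammaV k ∧ p.2 = y}

/-- The vertical line `V_x` is complete in `Γ_k`: its intersection with `Γ_k` is connected. -/
def CompleteV (k x : ℕ) : Prop := (SierpGraph.induce (VlineSet k x)).Connected

/-- The horizontal line `H_y` is complete in `Γ_k`: its intersection with `Γ_k` is connected. -/
def CompleteH (k y : ℕ) : Prop := (SierpGraph.induce (HlineSet k y)).Connected

/-- The vertex set of the complete-lines subgraph `C_k` of `Γ_k`. -/
noncomputable def CkV (k : ℕ) : Finset (ℕ × ℕ) :=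
  (GammaV k).filter fun p => CompleteV k p.1 ∨ CompleteH k p.2

/-!
A point `(x, y)` lies in `Γ_k` unless some digit position has `xᵢ = yᵢ = 1`. If no digit of `x`
is `1`, the whole column `{x} × [0, 3^k)` is present and is a path. If `xᵢ = 1` for some `i < k`,
the point `(x, 3^i)` is missing; steps along the column change `y` by one, so `(x, 0)` and
`(x, 2·3^i)` lie in different components. The admissible `x` are those with all `k` digits in
`{0, 2}`, of which there are `2^k`, and swapping coordinates is an automorphism of the Sierpinski
graph carrying `V_x` onto `H_x`.
-/

open Finset

section Digits

variable {b i j x c : ℕ}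

lemma digit_lt (hb : 0 < b) : digit b i x < b := Nat.mod_lt _ hb

lemma digit_zero_eq_mod : digit b 0 x = x % b := by simp [digit]

lemma digit_succ : digit b (i + 1) x = digit b i (x / b) := by
  simp [digit, Nat.div_div_eq_div_mul, pow_succ']

lemma digit_eq_zero_of_lt_pow (h : x < b ^ i) : digit b i x = 0 := by
  simp [digit, Nat.div_eq_of_lt h]

lemma digit_mul_pow (hc : c < b) : digit b j (c * b ^ i) = if j = i then c else 0 := by
  have hb : 0 < b := by omega
  rcases lt_trichotomy j i with h | rfl | h
  · obtain ⟨n, rfl⟩ := Nat.exists_eq_add_of_lt h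
    rw [if_neg h.ne, digit, show j + n + 1 = (n + 1) + j by omega, pow_add,
      ← mul_assoc, Nat.mul_div_cancel _ (pow_pos hb j), pow_succ, ← mul_assoc, Nat.mul_mod_left]
  · simp [digit, Nat.mul_div_cancel _ (pow_pos hb j), Nat.mod_eq_of_lt hc]
  · rw [if_neg h.ne', digit_eq_zero_of_lt_pow]
    calc c * b ^ i < b * b ^ i := Nat.mul_lt_mul_of_pos_right hc (pow_pos hb i)
      _ = b ^ (i + 1) := (pow_succ' b i).symm
      _ ≤ b ^ j := Nat.pow_le_pow_right hb h

end Digits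

noncomputable def digitRestricted (b k : ℕ) (D : Finset ℕ) : Finset ℕ :=
  {x ∈ range (b ^ k) | ∀ i < k, digit b i x ∈ D}

lemma mem_digitRestricted_succ {b k x : ℕ} {D : Finset ℕ} (hb : 0 < b) :
    x ∈ digitRestricted b (k + 1) D ↔ x % b ∈ D ∧ x / b ∈ digitRestricted b k D := by
  simp only [digitRestricted, mem_filter, mem_range, Nat.div_lt_iff_lt_mul hb, ← pow_succ]
  constructor
  · rintro ⟨hx, hd⟩
    exact ⟨digit_zero_eq_mod ▸ hd 0 k.succ_pos, hx, fun i hi => digit_succ ▸ hd (i + 1) (by omega)⟩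
  · rintro ⟨h0, hx, hd⟩
    refine ⟨hx, fun i hi => ?_⟩
    cases i with
    | zero => exact digit_zero_eq_mod ▸ h0
    | succ i => exact digit_succ ▸ hd i (by omega)

theorem card_digitRestricted {b : ℕ} (k : ℕ) {D : Finset ℕ} (hb : 0 < b) (hD : ∀ d ∈ D, d < b) :
    (digitRestricted b k D).card = D.card ^ k := by
  induction k with
  | zero =>
    have : digitRestricted b 0 D = {0} := by ext x; simp [digitRestricted]
    simp [this]
  | succ k ih =>
    have split_digit {d : ℕ} (hd : d ∈ D) (y : ℕ) : (d + b * y) % b = d ∧ (d + b * y) / b = y := by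
      have := hD d hd
      simp [Nat.add_mul_div_left _ _ hb, Nat.mod_eq_of_lt this, Nat.div_eq_of_lt this]
    rw [pow_succ', ← ih, ← card_product]
    refine card_nbij' (fun x => (x % b, x / b)) (fun p => p.1 + b * p.2) ?_ ?_ ?_ ?_
    · intro x hx
      simpa [mem_digitRestricted_succ hb] using hx
    · rintro ⟨d, y⟩ hp
      obtain ⟨hd, hy⟩ := mem_product.1 hp
      rw [mem_coe, mem_digitRestricted_succ hb, (split_digit hd y).1, (split_digit hd y).2]
      exact ⟨hd, hy⟩
    · intro x _
      exact Nat.mod_add_div x b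
    · rintro ⟨d, y⟩ hp
      have hd := (mem_product.1 hp).1
      exact Prod.ext (split_digit hd y).1 (split_digit hd y).2

section Columns

variable {k x : ℕ}

lemma mem_vlineSet {p : ℕ × ℕ} :
    p ∈ VlineSet k x ↔ p.1 = x ∧ x < 3 ^ k ∧ p.2 < 3 ^ k ∧ SierpMem p := by
  simp only [VlineSet, GammaV, Set.mem_ofPred_eq, mem_filter, mem_product, mem_range]
  constructor
  · rintro ⟨⟨⟨h1, h2⟩, hs⟩, rfl⟩; exact ⟨rfl, h1, h2, hs⟩
  · rintro ⟨rfl, h1, h2, hs⟩; exact ⟨⟨⟨h1, h2⟩, hs⟩, rfl⟩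

lemma lt_of_completeV (h : CompleteV k x) : x < 3 ^ k := by
  obtain ⟨⟨p, hp⟩⟩ := h.nonempty
  exact (mem_vlineSet.1 hp).2.1

lemma sierpGraph_adj_snd_succ {y : ℕ} (h : SierpMem (x, y)) (h' : SierpMem (x, y + 1)) :
    SierpGraph.Adj (x, y + 1) (x, y) :=
  ⟨h', h, by push_cast; simp⟩

lemma abs_sub_snd_le_one_of_adj {p q : ℕ × ℕ} (h : SierpGraph.Adj p q) :
    |(p.2 : ℤ) - q.2| ≤ 1 := by
  have := h.2.2
  have := abs_nonneg ((p.1 : ℤ) - q.1)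
  omega

lemma snd_lt_of_walk {s : Set (ℕ × ℕ)} {c : ℕ} (hc : ∀ p ∈ s, p.2 ≠ c) {u v : s}
    (w : (SierpGraph.induce s).Walk u v) (hu : u.1.2 < c) : v.1.2 < c := by
  induction w with
  | nil => exact hu
  | @cons a b _ hab _ ih =>
    apply ih
    have := abs_le.1 (abs_sub_snd_le_one_of_adj (p := a.1) (q := b.1) hab)
    have := hc b b.2
    omega

lemma completeV_of_digit_ne_one (hx : x < 3 ^ k) (hd : ∀ i, digit 3 i x ≠ 1) :
    CompleteV k x := by
  have sierp : ∀ y, SierpMem (x, y) := fun y i h => hd i h.1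
  have mem : ∀ y < 3 ^ k, (x, y) ∈ VlineSet k x :=
    fun y hy => mem_vlineSet.2 ⟨rfl, hx, hy, sierp y⟩
  have reach : ∀ y (hy : y < 3 ^ k), (SierpGraph.induce (VlineSet k x)).Reachable
      ⟨(x, 0), mem 0 (by positivity)⟩ ⟨(x, y), mem y hy⟩ := by
    intro y
    induction y with
    | zero => exact fun _ => .rfl
    | succ y ih =>
      intro hy
      refine (ih (by omega)).trans (SimpleGraph.Adj.reachable ?_).symm
      exact sierpGraph_adj_snd_succ (sierp y) (sierp (y + 1))
  rw [CompleteV, SimpleGraph.connected_iff_exists_forall_reachable]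
  refine ⟨⟨(x, 0), mem 0 (by positivity)⟩, fun ⟨p, hp⟩ => ?_⟩
  obtain ⟨rfl, -, hp2, -⟩ := mem_vlineSet.1 hp
  exact reach p.2 hp2

lemma not_completeV_of_digit_eq_one {i : ℕ} (hx : x < 3 ^ k) (hi : i < k)
    (h : digit 3 i x = 1) : ¬CompleteV k x := by
  intro hconn
  have h2 : 2 * 3 ^ i < 3 ^ k := calc
    2 * 3 ^ i < 3 ^ (i + 1) := by rw [pow_succ]; have := pow_pos (show 0 < 3 by norm_num) i; omega
    _ ≤ 3 ^ k := Nat.pow_le_pow_right (by norm_num) hi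
  have bottom : (x, 0) ∈ VlineSet k x :=
    mem_vlineSet.2 ⟨rfl, hx, by positivity, fun j hj => by simp [digit] at hj⟩
  have top : (x, 2 * 3 ^ i) ∈ VlineSet k x := by
    refine mem_vlineSet.2 ⟨rfl, hx, h2, fun j hj => ?_⟩
    have := hj.2
    rw [digit_mul_pow (by norm_num)] at this
    split_ifs at this; omega
  have gap : ∀ p ∈ VlineSet k x, p.2 ≠ 3 ^ i := by
    rintro p hp hp2
    obtain ⟨hp1, -, -, hs⟩ := mem_vlineSet.1 hp
    refine hs i ⟨hp1 ▸ h, ?_⟩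
    rw [hp2, ← one_mul (3 ^ i), digit_mul_pow (by norm_num), if_pos rfl]
  obtain ⟨w⟩ := hconn.preconnected ⟨_, bottom⟩ ⟨_, top⟩
  have := snd_lt_of_walk gap w (by positivity)
  simp only at this
  omega

theorem completeV_iff : CompleteV k x ↔ x < 3 ^ k ∧ ∀ i < k, digit 3 i x = 0 ∨ digit 3 i x = 2 := by
  refine ⟨fun h => ⟨lt_of_completeV h, fun i hi => ?_⟩, fun ⟨hx, hd⟩ => ?_⟩
  · by_contra hne
    have := digit_lt (i := i) (x := x) (show 0 < 3 by norm_num)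
    exact not_completeV_of_digit_eq_one (lt_of_completeV h) hi (by omega) h
  · refine completeV_of_digit_ne_one hx fun i => ?_
    rcases lt_or_ge i k with hi | hi
    · rcases hd i hi with h | h <;> omega
    · rw [digit_eq_zero_of_lt_pow (hx.trans_le (Nat.pow_le_pow_right (by norm_num) hi))]
      omega

end Columns

lemma sierpMem_swap {p : ℕ × ℕ} : SierpMem p.swap ↔ SierpMem p :=
  forall_congr' fun i => by rw [Prod.fst_swap, Prod.snd_swap, and_comm]

def sierpGraphSwap : SierpGraph ≃g SierpGraph where
  toEquiv := Equiv.prodComm ℕ ℕ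
  map_rel_iff' {p q} := by
    simp only [SierpGraph, Equiv.prodComm_apply, Prod.fst_swap, Prod.snd_swap, sierpMem_swap]
    rw [add_comm]

lemma completeH_iff_completeV (k y : ℕ) : CompleteH k y ↔ CompleteV k y := by
  have swap_mem (p : ℕ × ℕ) : p.swap ∈ HlineSet k y ↔ p ∈ VlineSet k y := by
    simp only [HlineSet, VlineSet, GammaV, Set.mem_ofPred_eq, mem_filter, mem_product,
      Prod.fst_swap, Prod.snd_swap, sierpMem_swap]
    tauto
  exact (sierpGraphSwap.induce (Equiv.bijOn (Equiv.prodComm ℕ ℕ) swap_mem)).connected_iff.symm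

/-- A vertical line `V_x` is complete in `Γ_k` iff `x < 3^k` and every base-3 digit of `x`
below position `k` lies in `{0,2}`; consequently `Γ_k` has exactly `2^k` complete vertical
lines and `2^k` complete horizontal lines. -/
theorem complete_lines_characterization (k : ℕ) :
    (∀ x : ℕ, CompleteV k x ↔
      x < 3 ^ k ∧ ∀ i < k, digit 3 i x = 0 ∨ digit 3 i x = 2) ∧
    {x : ℕ | CompleteV k x}.ncard = 2 ^ k ∧
    {y : ℕ | CompleteH k y}.ncard = 2 ^ k := by
  have hV : {x | CompleteV k x} = digitRestricted 3 k {0, 2} := by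
    ext x
    simp [completeV_iff, digitRestricted]
  have hcard : (digitRestricted 3 k {0, 2}).card = 2 ^ k :=
    card_digitRestricted k (by norm_num) (by simp)
  refine ⟨fun x => completeV_iff, ?_, ?_⟩
  · rw [hV, Set.ncard_coe_finset, hcard]
  · simp_rw [completeH_iff_completeV]
    rw [hV, Set.ncard_coe_finset, hcard]
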